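/- arXiv:2408.04120 — 4 statements merged into one kernel-verified Lean document; each statement's English description precedes it below -/
import Mathlib

section
/- Fix a weight vector w = (w_1,...,w_n) of positive integers with w_1 ≥ w_2 ≥ ... ≥ w_n. If a monomial ideal I ⊆ K[x_1,...,x_n] is w-stable, then I is strongly stable. -/
open Finset

/-- A monomial in `n` variables, given by its exponent vector. -/
abbrev Mon (n : ℕ) := Fin n → ℕ

/-- The set of monomials of a monomial ideal: a set of monomials upward closed
under divisibility (i.e. closed under multiplication by monomials). -/
def IsMonIdeal {n : ℕ} (I : Set (Mon n)) : Prop := ∀ a ∈ I, ∀ b, a ≤ b → b ∈ I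

/-- The Borel move sending `m` to `m · y_i / y_j`. -/
def borelMove {n : ℕ} (m : Mon n) (i j : Fin n) : Mon n :=
  fun k => if k = i then m k + 1 else if k = j then m k - 1 else m k

/-- A monomial ideal is strongly stable if it is closed under Borel moves
`m ↦ m · y_i / y_j` for `i < j` and `y_j ∣ m`. -/
def StronglyStable {n : ℕ} (I : Set (Mon n)) : Prop :=
  IsMonIdeal I ∧ ∀ m ∈ I, ∀ i j : Fin n, i < j → 0 < m j → borelMove m i j ∈ I

/-- `borelCl T` : the smallest strongly stable ideal containing the set of monomials `T`. -/
def borelCl {n : ℕ} (T : Set (Mon n)) : Set (Mon n) :=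
  ⋂₀ {J : Set (Mon n) | StronglyStable J ∧ T ⊆ J}

/-- The map `ψ : S → R`, `x_i ↦ y_i^{w_i}`, on exponent vectors. -/
def psi {n : ℕ} (w : Fin n → ℕ) (a : Mon n) : Mon n := fun i => w i * a i

/-- A monomial ideal `I ⊆ S` is `w`-stable if it equals its weighted Borel
closure `ψ⁻¹(Borel(ψ(I)))`. -/
def wStable {n : ℕ} (w : Fin n → ℕ) (I : Set (Mon n)) : Prop :=
  I = psi w ⁻¹' borelCl (psi w '' I)

/-- Total degree of a monomial. -/
def deg {n : ℕ} (m : Mon n) : ℕ := ∑ i, m i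

/-- Weighted degree `deg_w(m) = deg(ψ(m))`. -/
def degW {n : ℕ} (w : Fin n → ℕ) (m : Mon n) : ℕ := ∑ i, w i * m i

/-- `psum m t` : the number of variables (with multiplicity) of index `≤ t`
in the factorization of `m`. -/
def psum {n : ℕ} (m : Mon n) (t : Fin n) : ℕ := ∑ i ∈ Finset.univ.filter (· ≤ t), m i

/-- `psumLt m t` : the number of variables (with multiplicity) of index `< t`. -/
def psumLt {n : ℕ} (m : Mon n) (t : Fin n) : ℕ := ∑ i ∈ Finset.univ.filter (· < t), m i

/-- `precedes u v` : `u ≻ v`, i.e. `u` precedes `v` in the Borel order: writing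
`u = y_{i_1}⋯y_{i_r}`, `v = y_{j_1}⋯y_{j_s}` with increasing indices and `r ≥ s`,
we have `i_k ≤ j_k` for all `k ≤ s`.  Equivalently, for every index `t` the number
of factors of `v` of index `≤ t` is at most that of `u`. -/
def precedes {n : ℕ} (u v : Mon n) : Prop := ∀ t : Fin n, psum v t ≤ psum u t

/-- `max(m)` : the largest (1-based) index of a variable dividing `m` (`0` for `m = 1`). -/
def maxVar {n : ℕ} (m : Mon n) : ℕ :=
  (Finset.univ.filter (fun i => m i ≠ 0)).sup (fun i => i.val + 1)

/-- `max(m)` with the convention `max(1) = 1`. -/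
def maxVarOne {n : ℕ} (m : Mon n) : ℕ := max 1 (maxVar m)

/-- `trunc d m` : the `d`-truncation of a monomial, keeping the first `d`
variables (with multiplicity) of the increasing factorization of `m`
(equal to `m` itself when `d ≥ deg m`). -/
def trunc {n : ℕ} (d : ℕ) (m : Mon n) : Mon n :=
  fun k => min (psum m k) d - min (psumLt m k) d

/-- The `d`-truncation of a monomial ideal: the ideal generated by the
`d`-truncations of all its monomials. -/
def truncIdeal {n : ℕ} (d : ℕ) (J : Set (Mon n)) : Set (Mon n) :=
  {v | ∃ m ∈ J, trunc d m ≤ v}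

/-- `minGens J` : the minimal monomial generators of a monomial ideal, i.e. its
monomials not properly divisible by another monomial of the ideal. -/
def minGens {n : ℕ} (J : Set (Mon n)) : Set (Mon n) :=
  {u ∈ J | ∀ v ∈ J, v ≤ u → v = u}


lemma borelCl_stronglyStable {n : ℕ} (T : Set (Mon n)) : StronglyStable (borelCl T) := by
  constructor
  · intro a ha b hab J hJ
    exact hJ.1.1 a (ha J hJ) b hab
  · intro m hm i j hij hj J hJ
    exact hJ.1.2 m (hm J hJ) i j hij hj

lemma subset_borelCl {n : ℕ} (T : Set (Mon n)) : T ⊆ borelCl T := by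
  intro t ht J hJ
  exact hJ.2 ht

/-- iterated Borel moves -/
lemma iter_moves {n : ℕ} {J : Set (Mon n)} (hJ : StronglyStable J) (u : Mon n)
    (hu : u ∈ J) (i j : Fin n) (hij : i < j) :
    ∀ c, c ≤ u j →
      (fun k => if k = i then u k + c else if k = j then u k - c else u k) ∈ J := by
  intro c
  induction c with
  | zero =>
    intro _
    have : (fun k => if k = i then u k + 0 else if k = j then u k - 0 else u k) = u := by
      funext k; split <;> simp
    rw [this]; exact hu
  | succ c ih =>
    intro hc
    have hc' : c ≤ u j := Nat.le_of_succ_le hc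
    have hv := ih hc'
    have hne : i ≠ j := ne_of_lt hij
    have hpos : 0 < (fun k => if k = i then u k + c else if k = j then u k - c else u k) j := by
      simp only [if_neg (Ne.symm hne), eq_self_iff_true, if_true]
      omega
    have := hJ.2 _ hv i j hij hpos
    have heq : borelMove (fun k => if k = i then u k + c else if k = j then u k - c else u k) i j
        = (fun k => if k = i then u k + (c+1) else if k = j then u k - (c+1) else u k) := by
      funext k
      simp only [borelMove]
      by_cases hki : k = i
      · subst hki
        simp only [eq_self_iff_true, if_true]
        omega
      · by_cases hkj : k = j
        · subst hkj
          simp only [if_neg hki, eq_self_iff_true, if_true]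
          omega
        · simp only [if_neg hki, if_neg hkj]
    rwa [heq] at this

/-- If a monomial ideal `I` is `w`-stable for a monotone decreasing
positive weight vector `w`, then `I` is strongly stable. -/
theorem stmt0 {n : ℕ} (w : Fin n → ℕ) (hpos : ∀ i, 0 < w i) (hmono : Antitone w)
    (I : Set (Mon n)) (hI : IsMonIdeal I) (hws : wStable w I) :
    StronglyStable I := by
  refine ⟨hI, ?_⟩
  intro m hm i j hij hj
  set B := borelCl (psi w '' I) with hB
  have hSS : StronglyStable B := borelCl_stronglyStable _
  have hmB : psi w m ∈ B := by
    rw [hws] at hm; exact hm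
  have hcle : w j ≤ psi w m j := by
    simp only [psi]
    exact Nat.le_mul_of_pos_right _ hj
  have hv := iter_moves hSS (psi w m) hmB i j hij (w j) hcle
  have hwij : w j ≤ w i := hmono (le_of_lt hij)
  have hfin : psi w (borelMove m i j) ∈ B := by
    apply hSS.1 _ hv
    intro k
    simp only [psi, borelMove]
    by_cases hki : k = i
    · subst hki
      simp only [eq_self_iff_true, if_true]
      have h1 : w k * (m k + 1) = w k * m k + w k := by ring
      omega
    · by_cases hkj : k = j
      · subst hkj
        simp only [if_neg hki, eq_self_iff_true, if_true]
        have h1 : m k - 1 + 1 = m k := Nat.succ_pred_eq_of_pos hj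
        have h2 : w k * (m k - 1) + w k = w k * m k := by
          calc w k * (m k - 1) + w k = w k * ((m k - 1) + 1) := by ring
          _ = w k * m k := by rw [h1]
        omega
      · simp [hki, hkj]
  rw [hws]
  exact hfin
end

section
/- Let m, u be monomials in S. Then m ≼_w u if and only if u belongs to the principal w-stable ideal generated by m, i.e., u ∈ ψ^{-1}(Borel(ψ(m))). -/
open Finset

section AuxStmt1

variable {n : ℕ}

lemma psum_mono_left {a b : Mon n} (h : a ≤ b) (t : Fin n) : psum a t ≤ psum b t :=
  Finset.sum_le_sum fun i _ => h i

lemma psum_mono {m : Mon n} {s t : Fin n} (h : s ≤ t) : psum m s ≤ psum m t := by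
  apply Finset.sum_le_sum_of_subset
  intro i hi
  simp only [mem_filter, mem_univ, true_and] at *
  exact le_trans hi h

lemma psum_last {m : Mon n} (hn : 0 < n) :
    psum m ⟨n - 1, by omega⟩ = ∑ i, m i := by
  unfold psum
  congr 1
  apply Finset.filter_true_of_mem
  intro i _
  exact Fin.le_def.mpr (Nat.le_pred_of_lt i.isLt)

lemma psum_borelMove {m : Mon n} {i j : Fin n} (hij : i ≠ j) (hj : 0 < m j) (s : Fin n) :
    psum (borelMove m i j) s + (if j ≤ s then 1 else 0)
      = psum m s + (if i ≤ s then 1 else 0) := by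
  unfold psum
  have h1 : (if j ≤ s then 1 else 0) = ∑ k ∈ univ.filter (· ≤ s), (if k = j then 1 else 0) := by
    rw [Finset.sum_ite_eq' (univ.filter (· ≤ s)) j (fun _ => 1)]
    simp
  have h2 : (if i ≤ s then 1 else 0) = ∑ k ∈ univ.filter (· ≤ s), (if k = i then 1 else 0) := by
    rw [Finset.sum_ite_eq' (univ.filter (· ≤ s)) i (fun _ => 1)]
    simp
  rw [h1, h2, ← Finset.sum_add_distrib, ← Finset.sum_add_distrib]
  apply Finset.sum_congr rfl
  intro k _
  unfold borelMove
  by_cases hk : k = i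
  · subst hk
    simp [hij]
  · by_cases hk' : k = j
    · subst hk'
      simp [hk]
      omega
    · simp [hk, hk']

lemma psum_erase {v : Mon n} {j : Fin n} (hj : 0 < v j) (s : Fin n) :
    psum (fun k => if k = j then v j - 1 else v k) s + (if j ≤ s then 1 else 0)
      = psum v s := by
  unfold psum
  have h1 : (if j ≤ s then 1 else 0) = ∑ k ∈ univ.filter (· ≤ s), (if k = j then 1 else 0) := by
    rw [Finset.sum_ite_eq' (univ.filter (· ≤ s)) j (fun _ => 1)]
    simp
  rw [h1, ← Finset.sum_add_distrib]
  apply Finset.sum_congr rfl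
  intro k _
  by_cases hk : k = j
  · subst hk; simp; omega
  · simp [hk]


lemma eq_of_psum_eq {a b : Mon n} (h : ∀ t, psum a t = psum b t) : a = b := by
  have key : ∀ (c : Mon n) (k : Fin n), psum c k = psumLt c k + c k := by
    intro c k
    unfold psum psumLt
    have hfil : univ.filter (· ≤ k) = insert k (univ.filter (· < k)) := by
      ext i
      simp only [mem_filter, mem_univ, true_and, mem_insert]
      constructor
      · intro hik
        rcases eq_or_lt_of_le hik with h' | h'
        · exact Or.inl h'
        · exact Or.inr h'
      · rintro (rfl | h')
        · exact le_refl _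
        · exact le_of_lt h'
    rw [hfil, Finset.sum_insert (by simp)]
    omega
  have keyLt : ∀ (c : Mon n) (k : Fin n), psumLt c k =
      if hk : k.val = 0 then 0 else psum c ⟨k.val - 1, by omega⟩ := by
    intro c k
    by_cases hk : k.val = 0
    · rw [dif_pos hk]
      unfold psumLt
      apply Finset.sum_eq_zero
      intro i hi
      simp only [mem_filter, mem_univ, true_and] at hi
      exact absurd hi (by simp [Fin.lt_def, hk])
    · rw [dif_neg hk]
      unfold psum psumLt
      congr 1
      ext i
      simp only [mem_filter, mem_univ, true_and, Fin.lt_def, Fin.le_def]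
      omega
  funext k
  have h1 := key a k
  have h2 := key b k
  have h3 : psumLt a k = psumLt b k := by
    rw [keyLt a k, keyLt b k]
    by_cases hk : k.val = 0
    · rw [dif_pos hk, dif_pos hk]
    · rw [dif_neg hk, dif_neg hk]; exact h _
  have h4 := h k
  omega

lemma mem_of_precedes {J : Set (Mon n)} (hJ : StronglyStable J)
    {m v : Mon n} (hm : m ∈ J) (hp : precedes v m) : v ∈ J := by
  obtain ⟨hI, hB⟩ := hJ
  suffices H : ∀ μ (m v : Mon n), m ∈ J → precedes v m →
      (∑ t, (psum v t - psum m t)) = μ → v ∈ J from H _ m v hm hp rfl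
  clear hm hp m v
  intro μ
  induction μ using Nat.strong_induction_on with
  | _ μ ih =>
  intro m v hm hp hμ
  rcases Nat.eq_zero_or_pos μ with h0 | hμpos
  · -- base case : v = m
    subst h0
    have hz : ∀ t : Fin n, psum v t - psum m t = 0 := fun t =>
      Finset.sum_eq_zero_iff.mp hμ t (mem_univ t)
    have hvm : v = m := eq_of_psum_eq (fun t => le_antisymm
      (by have := hz t; have := hp t; omega) (hp t))
    rwa [hvm]
  rcases Nat.eq_zero_or_pos n with rfl | hn
  · simp at hμ; omega
  set last : Fin n := ⟨n - 1, by omega⟩ with hlast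
  have hle_last : ∀ s : Fin n, s ≤ last := fun s => Fin.le_def.mpr (Nat.le_pred_of_lt s.isLt)
  have hdeg := hp last
  rcases eq_or_lt_of_le hdeg with hdeq | hdlt
  · -- equal degrees : use a Borel move on m
    obtain ⟨t0, ht0⟩ : ∃ t, psum m t < psum v t := by
      by_contra h
      push_neg at h
      have : ∀ t ∈ (univ : Finset (Fin n)), psum v t - psum m t = 0 := by
        intro t _; have := h t; omega
      rw [Finset.sum_eq_zero this] at hμ
      omega
    set T := univ.filter (fun t => psum m t < psum v t) with hT
    have hTne : T.Nonempty := ⟨t0, by simp [hT, ht0]⟩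
    set t := T.min' hTne with ht
    have htmem : psum m t < psum v t := by
      have := T.min'_mem hTne
      simpa [hT] using this
    have htmin : ∀ s, psum m s < psum v s → t ≤ s := by
      intro s hs
      exact T.min'_le s (by simp [hT, hs])
    -- there is a variable of m of index > t
    obtain ⟨j0, hj0⟩ : ∃ j, t < j ∧ 0 < m j := by
      by_contra h
      push_neg at h
      have hml : psum m t = psum m last := by
        unfold psum
        apply Finset.sum_subset
        · intro i hi
          simp only [mem_filter, mem_univ, true_and] at *
          exact hle_last i
        · intro i _ hi
          simp only [mem_filter, mem_univ, true_and] at hi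
          have hti : t < i := lt_of_not_ge hi
          have := h i hti
          omega
      have h2 : psum v t ≤ psum v last := psum_mono (hle_last t)
      omega
    set Js := univ.filter (fun j => t < j ∧ 0 < m j) with hJs
    have hJne : Js.Nonempty := ⟨j0, by simp [hJs, hj0.1, hj0.2]⟩
    set j := Js.min' hJne with hj
    have hjmem : t < j ∧ 0 < m j := by
      have h := Js.min'_mem hJne
      rw [← hj] at h
      rw [hJs, mem_filter] at h
      exact h.2
    have hjmin : ∀ s, t < s → 0 < m s → j ≤ s := by
      intro s h1 h2
      exact Js.min'_le s (by simp [hJs, h1, h2])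
    have hmid : ∀ s, t ≤ s → s < j → psum m s = psum m t := by
      intro s h1 h2
      unfold psum
      symm
      apply Finset.sum_subset
      · intro i hi
        simp only [mem_filter, mem_univ, true_and] at *
        exact le_trans hi h1
      · intro i hi hi'
        simp only [mem_filter, mem_univ, true_and] at hi hi'
        have hti : t < i := lt_of_not_ge hi'
        by_contra hmi
        have : j ≤ i := hjmin i hti (by omega)
        have : i < j := lt_of_le_of_lt hi h2
        omega
    have htj : t ≠ j := ne_of_lt hjmem.1
    set m₁ := borelMove m t j with hm₁def
    have hm₁ : m₁ ∈ J := hB m hm t j hjmem.1 hjmem.2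
    have hps : ∀ s, psum m₁ s + (if j ≤ s then 1 else 0)
        = psum m s + (if t ≤ s then 1 else 0) :=
      fun s => psum_borelMove htj hjmem.2 s
    have hp₁ : precedes v m₁ := by
      intro s
      have hs := hps s
      by_cases hts : t ≤ s
      · by_cases hjs : j ≤ s
        · rw [if_pos hts, if_pos hjs] at hs
          have := hp s
          omega
        · rw [if_pos hts, if_neg hjs] at hs
          have h1 : psum m s = psum m t := hmid s hts (lt_of_not_ge hjs)
          have h2 : psum v t ≤ psum v s := psum_mono hts
          omega
      · have hjs : ¬ j ≤ s := fun h => hts (le_trans (le_of_lt hjmem.1) h)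
        rw [if_neg hts, if_neg hjs] at hs
        have := hp s
        omega
    have hlt : (∑ s, (psum v s - psum m₁ s)) < μ := by
      rw [← hμ]
      apply Finset.sum_lt_sum
      · intro s _
        have hs := hps s
        by_cases hts : t ≤ s
        · by_cases hjs : j ≤ s
          · rw [if_pos hts, if_pos hjs] at hs; omega
          · rw [if_pos hts, if_neg hjs] at hs; omega
        · have hjs : ¬ j ≤ s := fun h => hts (le_trans (le_of_lt hjmem.1) h)
          rw [if_neg hts, if_neg hjs] at hs; omega
      · refine ⟨t, mem_univ t, ?_⟩
        have hs := hps t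
        have hjt : ¬ j ≤ t := not_le_of_gt hjmem.1
        rw [if_pos (le_refl t), if_neg hjt] at hs
        have := hp₁ t
        omega
    exact ih _ hlt m₁ v hm₁ hp₁ rfl
  · -- deg m < deg v : remove the top variable of v
    have hdegm : psum m last = ∑ i, m i := psum_last hn
    have hdegv : psum v last = ∑ i, v i := psum_last hn
    obtain ⟨j0, hj0⟩ : ∃ j, 0 < v j := by
      by_contra h
      push_neg at h
      have : ∑ i, v i = 0 := Finset.sum_eq_zero (fun i _ => by have := h i; omega)
      omega
    set K := univ.filter (fun j => 0 < v j) with hK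
    have hKne : K.Nonempty := ⟨j0, by simp [hK, hj0]⟩
    set j := K.max' hKne with hj
    have hjmem : 0 < v j := by
      have := K.max'_mem hKne
      simpa [hK] using this
    have hjmax : ∀ k, 0 < v k → k ≤ j := fun k hk => K.le_max' k (by simp [hK, hk])
    set v' : Mon n := fun k => if k = j then v j - 1 else v k with hv'def
    have hv'le : v' ≤ v := by
      intro k
      by_cases hk : k = j
      · subst hk; simp [hv'def]
      · simp [hv'def, hk]
    have hps : ∀ s, psum v' s + (if j ≤ s then 1 else 0) = psum v s :=
      fun s => psum_erase hjmem s
    have hvtop : ∀ s, j ≤ s → psum v s = ∑ i, v i := by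
      intro s hs
      unfold psum
      apply Finset.sum_subset
      · intro i _; exact mem_univ i
      · intro i _ hi
        simp only [mem_filter, mem_univ, true_and] at hi
        have hsi : s < i := lt_of_not_ge hi
        by_contra hvi
        have : i ≤ j := hjmax i (by omega)
        have : j < i := lt_of_le_of_lt hs hsi
        omega
    have hp' : precedes v' m := by
      intro s
      have hs := hps s
      by_cases hjs : j ≤ s
      · rw [if_pos hjs] at hs
        have h1 : psum v s = ∑ i, v i := hvtop s hjs
        have h2 : psum m s ≤ psum m last := psum_mono (hle_last s)
        omega
      · rw [if_neg hjs] at hs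
        have := hp s
        omega
    have hlt : (∑ s, (psum v' s - psum m s)) < μ := by
      rw [← hμ]
      apply Finset.sum_lt_sum
      · intro s _
        have hs := hps s
        have : psum v' s ≤ psum v s := by omega
        omega
      · refine ⟨last, mem_univ last, ?_⟩
        have hs := hps last
        rw [if_pos (hle_last j)] at hs
        have := hp' last
        omega
    have hv' : v' ∈ J := ih _ hlt m v' hm hp' rfl
    exact hI v' hv' v hv'le

lemma precedes_stronglyStable (m : Mon n) : StronglyStable {v : Mon n | precedes v m} := by
  constructor
  · intro a ha b hab t
    exact le_trans (ha t) (psum_mono_left hab t)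
  · intro a ha i j hij hja t
    have hs := psum_borelMove (ne_of_lt hij) hja t
    by_cases hjt : j ≤ t
    · have hit : i ≤ t := le_trans (le_of_lt hij) hjt
      rw [if_pos hjt, if_pos hit] at hs
      have := ha t
      omega
    · rw [if_neg hjt] at hs
      have := ha t
      by_cases hit : i ≤ t
      · rw [if_pos hit] at hs; omega
      · rw [if_neg hit] at hs; omega

end AuxStmt1

/-- `m ≼_w u` iff `u` belongs to the principal `w`-stable ideal
`ψ⁻¹(Borel(ψ(m)))` generated by `m`. -/
theorem stmt1 {n : ℕ} (w : Fin n → ℕ) (hpos : ∀ i, 0 < w i) (hmono : Antitone w) (m u : Mon n) :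
    precedes (psi w u) (psi w m) ↔ u ∈ psi w ⁻¹' borelCl {psi w m} := by
  constructor
  · intro h
    simp only [Set.mem_preimage, borelCl, Set.mem_sInter]
    rintro J ⟨hJ, hsub⟩
    exact mem_of_precedes hJ (hsub rfl) h
  · intro h
    have hmem : psi w u ∈ borelCl {psi w m} := h
    have hsub : borelCl {psi w m} ⊆ {v : Mon n | precedes v (psi w m)} := by
      apply Set.sInter_subset_of_mem
      exact ⟨precedes_stronglyStable (psi w m), by
        intro x hx
        rw [Set.mem_singleton_iff] at hx
        subst hx
        exact fun t => le_refl _⟩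
    exact hsub hmem
end

section
/- Let J ⊆ R be a strongly stable ideal. Then for any positive integer d, the d-truncation of J is the Borel closure of the d-truncations of the Borel generators of J: trunc_d(J) = Borel({trunc_d(m) : m ∈ Bgens(J)}). -/
open Finset

/-- `Bgens(J)` : the monomials that lie in every Borel generating set of `J`
(for a strongly stable ideal this is the unique minimal set of Borel generators). -/
def bgens {n : ℕ} (J : Set (Mon n)) : Set (Mon n) := {m | ∀ T, borelCl T = J → m ∈ T}

namespace Stmt10Aux

def P {n : ℕ} (m : Mon n) (k : ℕ) : ℕ :=
  ∑ i ∈ Finset.univ.filter (fun i : Fin n => (i : ℕ) < k), m i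

lemma P_zero {n : ℕ} (m : Mon n) : P m 0 = 0 := by simp [P]

lemma P_succ {n : ℕ} (m : Mon n) {k : ℕ} (hk : k < n) :
    P m (k + 1) = P m k + m ⟨k, hk⟩ := by
  unfold P
  have h : Finset.univ.filter (fun i : Fin n => (i : ℕ) < k + 1)
      = insert (⟨k, hk⟩ : Fin n) (Finset.univ.filter (fun i : Fin n => (i : ℕ) < k)) := by
    ext l
    simp only [Finset.mem_filter, Finset.mem_univ, true_and, Finset.mem_insert, Fin.ext_iff,
      Fin.val_mk]
    omega
  rw [h, Finset.sum_insert (by simp)]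
  omega

lemma P_mono {n : ℕ} (m : Mon n) {k l : ℕ} (h : k ≤ l) : P m k ≤ P m l := by
  apply Finset.sum_le_sum_of_subset
  intro i hi
  simp only [Finset.mem_filter, Finset.mem_univ, true_and] at hi ⊢
  omega

lemma P_stab {n : ℕ} (m : Mon n) {k : ℕ} (h : n ≤ k) : P m k = deg m := by
  unfold P deg
  rw [Finset.filter_true_of_mem (fun i _ => lt_of_lt_of_le i.isLt h)]

lemma deg_P {n : ℕ} (m : Mon n) : deg m = P m n := (P_stab m le_rfl).symm

lemma P_le_deg {n : ℕ} (w : Mon n) (k : ℕ) : P w k ≤ deg w := by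
  rcases le_or_gt k n with h | h
  · rw [deg_P]; exact P_mono w h
  · rw [P_stab w h.le]

lemma psum_eq {n : ℕ} (m : Mon n) (t : Fin n) : psum m t = P m (t.val + 1) := by
  unfold psum P
  apply Finset.sum_congr _ (fun _ _ => rfl)
  ext i
  simp only [Finset.mem_filter, Finset.mem_univ, true_and, Fin.le_def]
  omega

lemma psumLt_eq {n : ℕ} (m : Mon n) (t : Fin n) : psumLt m t = P m t.val := by
  unfold psumLt P
  apply Finset.sum_congr _ (fun _ _ => rfl)
  ext i
  simp only [Finset.mem_filter, Finset.mem_univ, true_and, Fin.lt_def]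

lemma trunc_apply {n : ℕ} (d : ℕ) (m : Mon n) (i : Fin n) :
    trunc d m i = min (P m (i.val + 1)) d - min (P m i.val) d := by
  unfold trunc
  rw [psum_eq, psumLt_eq]

lemma trunc_apply' {n : ℕ} (d : ℕ) (m : Mon n) {k : ℕ} (hk : k < n) :
    trunc d m ⟨k, hk⟩ = min (P m (k + 1)) d - min (P m k) d := by
  rw [trunc_apply]

lemma P_trunc {n : ℕ} (d : ℕ) (m : Mon n) (k : ℕ) :
    P (trunc d m) k = min (P m k) d := by
  induction k with
  | zero => simp [P_zero]
  | succ k ih =>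
    by_cases hk : k < n
    · have hg : P (trunc d m) (k + 1) = P (trunc d m) k + trunc d m ⟨k, hk⟩ := P_succ _ hk
      have hm : P m (k + 1) = P m k + m ⟨k, hk⟩ := P_succ m hk
      rw [hg, ih, trunc_apply' d m hk]
      omega
    · push_neg at hk
      have e1 : P (trunc d m) (k + 1) = P (trunc d m) k := by
        rw [P_stab _ hk, P_stab _ (hk.trans (Nat.le_succ k))]
      have e2 : P m (k + 1) = P m k := by
        rw [P_stab _ hk, P_stab _ (hk.trans (Nat.le_succ k))]
      rw [e1, e2, ih]

lemma P_le {n : ℕ} {w m : Mon n} (h : w ≤ m) (k : ℕ) : P w k ≤ P m k :=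
  Finset.sum_le_sum fun i _ => h i

lemma eq_of_P {n : ℕ} {w u : Mon n} (h : ∀ k, P w k = P u k) : w = u := by
  funext i
  have h1 : P w (i.val + 1) = P w i.val + w i := by simpa using P_succ w i.isLt
  have h2 : P u (i.val + 1) = P u i.val + u i := by simpa using P_succ u i.isLt
  have h3 := h i.val
  have h4 := h (i.val + 1)
  omega

lemma trunc_le_self {n : ℕ} (d : ℕ) (m : Mon n) : trunc d m ≤ m := by
  intro i
  show trunc d m i ≤ m i
  rw [trunc_apply]
  have h : P m (i.val + 1) = P m i.val + m i := by simpa using P_succ m i.isLt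
  omega

lemma P_borelMove {n : ℕ} (m : Mon n) {i j : Fin n} (hij : i ≠ j) (hj : 0 < m j) (k : ℕ) :
    P (borelMove m i j) k + (if (j : ℕ) < k then 1 else 0)
      = P m k + (if (i : ℕ) < k then 1 else 0) := by
  have key : ∀ l, borelMove m i j l + (if l = j then 1 else 0)
      = m l + (if l = i then 1 else 0) := by
    intro l
    simp only [borelMove]
    rcases eq_or_ne l i with rfl | hli
    · simp [hij]
    · rcases eq_or_ne l j with rfl | hlj
      · simp [hli]
        omega
      · simp [hli, hlj]
  have hsum : ∑ l ∈ Finset.univ.filter (fun i : Fin n => (i : ℕ) < k),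
        (borelMove m i j l + (if l = j then 1 else 0))
      = ∑ l ∈ Finset.univ.filter (fun i : Fin n => (i : ℕ) < k),
        (m l + (if l = i then 1 else 0)) :=
    Finset.sum_congr rfl fun l _ => key l
  rw [Finset.sum_add_distrib, Finset.sum_add_distrib] at hsum
  have hjs : ∑ l ∈ Finset.univ.filter (fun i : Fin n => (i : ℕ) < k),
      (if l = j then (1 : ℕ) else 0) = if (j : ℕ) < k then 1 else 0 := by
    rw [Finset.sum_ite_eq']
    simp
  have his : ∑ l ∈ Finset.univ.filter (fun i : Fin n => (i : ℕ) < k),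
      (if l = i then (1 : ℕ) else 0) = if (i : ℕ) < k then 1 else 0 := by
    rw [Finset.sum_ite_eq']
    simp
  rw [hjs, his] at hsum
  exact hsum

lemma deg_borelMove {n : ℕ} (m : Mon n) {i j : Fin n} (hij : i ≠ j) (hj : 0 < m j) :
    deg (borelMove m i j) = deg m := by
  have h := P_borelMove m hij hj n
  rw [if_pos j.isLt, if_pos i.isLt] at h
  rw [deg_P, deg_P]
  omega

lemma borelMove_mono {n : ℕ} {a v : Mon n} (h : a ≤ v) (i j : Fin n) :
    borelMove a i j ≤ borelMove v i j := by
  intro k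
  show borelMove a i j k ≤ borelMove v i j k
  have hk : a k ≤ v k := h k
  simp only [borelMove]
  split_ifs <;> omega

lemma mem_borelCl_iff {n : ℕ} {T : Set (Mon n)} {v : Mon n} :
    v ∈ borelCl T ↔ ∀ J : Set (Mon n), StronglyStable J → T ⊆ J → v ∈ J := by
  simp only [borelCl, Set.mem_sInter, Set.mem_setOf_eq]
  constructor
  · intro h J h1 h2; exact h J ⟨h1, h2⟩
  · intro h J hJ; exact h J hJ.1 hJ.2

lemma stronglyStable_borelCl {n : ℕ} (T : Set (Mon n)) : StronglyStable (borelCl T) := by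
  constructor
  · intro a ha b hb
    rw [mem_borelCl_iff] at *
    intro J h1 h2
    exact h1.1 a (ha J h1 h2) b hb
  · intro m hm i j hij hj
    rw [mem_borelCl_iff] at *
    intro J h1 h2
    exact h1.2 m (hm J h1 h2) i j hij hj

lemma subset_borelCl {n : ℕ} (T : Set (Mon n)) : T ⊆ borelCl T := by
  intro t ht
  rw [mem_borelCl_iff]
  intro J _ h2
  exact h2 ht

lemma borelCl_subset {n : ℕ} {T J : Set (Mon n)} (hJ : StronglyStable J) (h : T ⊆ J) :
    borelCl T ⊆ J := fun _ hv => (mem_borelCl_iff.mp hv) J hJ h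

lemma borelCl_mono {n : ℕ} {T T' : Set (Mon n)} (h : T ⊆ T') : borelCl T ⊆ borelCl T' :=
  borelCl_subset (stronglyStable_borelCl T') (h.trans (subset_borelCl T'))

lemma borelCl_self {n : ℕ} {J : Set (Mon n)} (hJ : StronglyStable J) : borelCl J = J :=
  subset_antisymm (borelCl_subset hJ subset_rfl) (subset_borelCl J)

lemma moves {n : ℕ} {J : Set (Mon n)} (hJ : StronglyStable J) :
    ∀ D (w u : Mon n), (∑ k ∈ Finset.range n, (P w k - P u k)) = D →
      (∀ k, P u k ≤ P w k) → P w n = P u n → u ∈ J → w ∈ J := by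
  intro D
  induction D using Nat.strong_induction_on with
  | _ D ih =>
    intro w u hD hle hdeg hu
    rcases Nat.eq_zero_or_pos D with h0 | h0
    · have hall : ∀ k ∈ Finset.range n, P w k - P u k = 0 := by
        rw [← Finset.sum_eq_zero_iff]
        omega
      have : w = u := by
        apply eq_of_P
        intro k
        rcases lt_or_ge k n with hk | hk
        · have := hall k (Finset.mem_range.mpr hk)
          have := hle k
          omega
        · rw [P_stab w hk, P_stab u hk, deg_P, deg_P]
          exact hdeg
      rw [this]; exact hu
    · have hex : ∃ k, P u k < P w k := by
        by_contra hc
        push_neg at hc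
        have : ∑ k ∈ Finset.range n, (P w k - P u k) = 0 :=
          Finset.sum_eq_zero fun k _ => by have := hc k; have := hle k; omega
        omega
      have hexn : ∃ k, k < n ∧ P u k < P w k := by
        obtain ⟨k, hk⟩ := hex
        rcases lt_or_ge k n with h | h
        · exact ⟨k, h, hk⟩
        · rw [P_stab w h, P_stab u h, deg_P w, deg_P u] at hk
          exfalso
          omega
      obtain ⟨k0, hk0n, hk0⟩ := hexn
      have hPex : ∃ k, P u k < P w k := ⟨k0, hk0⟩
      set i' := Nat.find hPex with hi'def
      have hi'spec : P u i' < P w i' := Nat.find_spec hPex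
      have hi'n : i' < n := lt_of_le_of_lt (Nat.find_min' hPex hk0) hk0n
      have hi'pos : 0 < i' := by
        rcases Nat.eq_zero_or_pos i' with h | h
        · rw [h, P_zero, P_zero] at hi'spec; omega
        · exact h
      have hjex : ∃ k, i' < k ∧ P w k ≤ P u k := ⟨n, hi'n, hdeg.le⟩
      set j' := Nat.find hjex with hj'def
      have hj'spec : i' < j' ∧ P w j' ≤ P u j' := Nat.find_spec hjex
      have hj'n : j' ≤ n := Nat.find_min' hjex ⟨hi'n, hdeg.le⟩
      have hmid : ∀ k, i' ≤ k → k < j' → P u k < P w k := by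
        intro k h1 h2
        rcases eq_or_lt_of_le h1 with rfl | h1'
        · exact hi'spec
        · have h3 := Nat.find_min hjex h2
          push_neg at h3
          exact h3 h1'
      set i : Fin n := ⟨i' - 1, by omega⟩ with hidef
      set j : Fin n := ⟨j' - 1, by omega⟩ with hjdef
      have hival : (i : ℕ) = i' - 1 := rfl
      have hjval : (j : ℕ) = j' - 1 := rfl
      have hijlt : i < j := by
        rw [Fin.lt_def, hival, hjval]
        omega
      have hj1 : P u (j' - 1) < P w (j' - 1) := hmid _ (by omega) (by omega)
      have hsucc : P u (j' - 1 + 1) = P u (j' - 1) + u j :=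
        P_succ u (show j' - 1 < n by omega)
      have hj'eq : j' - 1 + 1 = j' := by omega
      have hwmono : P w (j' - 1) ≤ P w j' := P_mono w (by omega)
      have hupos : 0 < u j := by
        rw [hj'eq] at hsucc
        have := hj'spec.2
        have := hle j'
        omega
      have hu' : borelMove u i j ∈ J := hJ.2 u hu i j hijlt hupos
      have hP' := P_borelMove u (ne_of_lt hijlt) hupos
      have hle' : ∀ k, P (borelMove u i j) k ≤ P w k := by
        intro k
        have h1 := hP' k
        rw [hival, hjval] at h1
        rcases le_or_gt k (i' - 1) with hk1 | hk1
        · have h2 := hle k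
          split_ifs at h1 <;> omega
        · rcases le_or_gt j' k with hk2 | hk2
          · have h2 := hle k
            split_ifs at h1 <;> omega
          · have h2 := hmid k (by omega) hk2
            split_ifs at h1 <;> omega
      have hdeg' : P w n = P (borelMove u i j) n := by
        have h1 := hP' n
        rw [hival, hjval] at h1
        have hc1 : i' - 1 < n := by omega
        have hc2 : j' - 1 < n := by omega
        rw [if_pos hc2, if_pos hc1] at h1
        omega
      have hlt : (∑ k ∈ Finset.range n, (P w k - P (borelMove u i j) k)) < D := by
        rw [← hD]
        apply Finset.sum_lt_sum
        · intro k _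
          have h1 := hP' k
          rw [hival, hjval] at h1
          split_ifs at h1 <;> omega
        · refine ⟨i', Finset.mem_range.mpr hi'n, ?_⟩
          have h1 := hP' i'
          rw [hival, hjval] at h1
          have h2 := hi'spec
          have h3 := hj'spec.1
          split_ifs at h1 <;> omega
      exact ih _ hlt w (borelMove u i j) rfl hle' hdeg' hu'

/-- The "domination closure": explicit description of the Borel closure. -/
def domCl {n : ℕ} (T : Set (Mon n)) : Set (Mon n) :=
  {v | ∃ u ∈ T, ∃ w, w ≤ v ∧ deg w = deg u ∧ ∀ k, P u k ≤ P w k}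

lemma subset_domCl {n : ℕ} (T : Set (Mon n)) : T ⊆ domCl T :=
  fun u hu => ⟨u, hu, u, le_rfl, rfl, fun _ => le_rfl⟩

lemma stronglyStable_domCl {n : ℕ} (T : Set (Mon n)) : StronglyStable (domCl T) := by
  constructor
  · rintro a ⟨u, hu, w, hwa, hdeg, hP⟩ b hab
    exact ⟨u, hu, w, hwa.trans hab, hdeg, hP⟩
  · rintro v ⟨u, hu, w, hwv, hdeg, hP⟩ i j hij hvj
    rcases Nat.eq_zero_or_pos (w j) with hwj | hwj
    · refine ⟨u, hu, w, ?_, hdeg, hP⟩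
      intro k
      show w k ≤ borelMove v i j k
      have h : w k ≤ v k := hwv k
      simp only [borelMove]
      rcases eq_or_ne k i with rfl | h1
      · rw [if_pos rfl]; omega
      · rw [if_neg h1]
        rcases eq_or_ne k j with rfl | h2
        · rw [if_pos rfl]; omega
        · rw [if_neg h2]; exact h
    · refine ⟨u, hu, borelMove w i j, borelMove_mono hwv i j, ?_, ?_⟩
      · rw [deg_borelMove w (ne_of_lt hij) hwj, hdeg]
      · intro k
        have h1 := P_borelMove w (ne_of_lt hij) hwj k
        have h2 := hP k
        have hij' : (i : ℕ) < (j : ℕ) := hij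
        split_ifs at h1 <;> omega

lemma borelCl_eq_domCl {n : ℕ} (T : Set (Mon n)) : borelCl T = domCl T := by
  apply subset_antisymm
  · exact borelCl_subset (stronglyStable_domCl T) (subset_domCl T)
  · rintro v ⟨u, hu, w, hwv, hdeg, hP⟩
    have hw : w ∈ borelCl T := by
      apply moves (stronglyStable_borelCl T) _ w u rfl hP ?_ (subset_borelCl T hu)
      rw [← deg_P, ← deg_P]
      exact hdeg
    exact (stronglyStable_borelCl T).1 w hw v hwv

lemma bgens_subset {n : ℕ} {J : Set (Mon n)} (hJ : StronglyStable J) : bgens J ⊆ J :=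
  fun m hm => hm J (borelCl_self hJ)

lemma subset_borelCl_bgens {n : ℕ} {J : Set (Mon n)} (hJ : StronglyStable J) :
    J ⊆ borelCl (bgens J) := by
  classical
  set B : Set (Mon n) := {m | m ∈ J ∧ m ∉ borelCl (J \ {m})} with hBdef
  have hBsub : B ⊆ bgens J := by
    rintro m ⟨hmJ, hm2⟩ T hT
    by_contra hmT
    apply hm2
    have hTJ : T ⊆ J \ {m} := by
      intro t ht
      refine ⟨hT ▸ subset_borelCl T ht, ?_⟩
      simp only [Set.mem_singleton_iff]
      rintro rfl
      exact hmT ht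
    exact borelCl_mono hTJ (hT.symm ▸ hmJ)
  have main : ∀ N (m : Mon n), (∑ k ∈ Finset.range (n + 1), P m k) = N → m ∈ J →
      m ∈ borelCl B := by
    intro N
    induction N using Nat.strong_induction_on with
    | _ N ih =>
      intro m hN hm
      by_cases hmB : m ∈ B
      · exact subset_borelCl B hmB
      · have hm2 : m ∈ borelCl (J \ {m}) := by
          by_contra hc
          exact hmB ⟨hm, hc⟩
        rw [borelCl_eq_domCl] at hm2
        obtain ⟨u, hu, w, hwm, hdeg, hP⟩ := hm2
        have huJ : u ∈ J := hu.1
        have hune : u ≠ m := by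
          have := hu.2
          simpa using this
        have hPm : ∀ k, P u k ≤ P m k := fun k => (hP k).trans (P_le hwm k)
        have hne : ∃ k, k < n + 1 ∧ P u k < P m k := by
          by_contra hc
          push_neg at hc
          have heq : ∀ k, P u k = P m k := by
            intro k
            rcases lt_or_ge k (n + 1) with hk | hk
            · have := hc k hk
              have := hPm k
              omega
            · rw [P_stab u (by omega), P_stab m (by omega), deg_P u, deg_P m]
              have h1 := hc n (by omega)
              have h2 := hPm n
              omega
          exact hune (eq_of_P heq)
        obtain ⟨k1, hk1, hk1'⟩ := hne
        have hlt : (∑ k ∈ Finset.range (n + 1), P u k) < N := by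
          rw [← hN]
          exact Finset.sum_lt_sum (fun k _ => hPm k) ⟨k1, Finset.mem_range.mpr hk1, hk1'⟩
        have huB : u ∈ borelCl B := ih _ hlt u rfl huJ
        have hwB : w ∈ borelCl B := by
          apply moves (stronglyStable_borelCl B) _ w u rfl hP ?_ huB
          rw [← deg_P, ← deg_P]
          exact hdeg
        exact (stronglyStable_borelCl B).1 w hwB m hwm
  intro m hm
  exact borelCl_mono hBsub (main _ m rfl hm)

lemma trunc_borelMove_le {n : ℕ} {d : ℕ} {m : Mon n} {i j : Fin n} (hij : i < j)
    (hj : 0 < m j) (htj : 0 < trunc d m j) :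
    trunc d (borelMove m i j) ≤ borelMove (trunc d m) i j := by
  intro k
  show trunc d (borelMove m i j) k ≤ borelMove (trunc d m) i j k
  have hijn : (i : ℕ) < (j : ℕ) := hij
  have h1 := P_borelMove m (ne_of_lt hij) hj k.val
  have h2 := P_borelMove m (ne_of_lt hij) hj (k.val + 1)
  have hmono1 : P m k.val ≤ P m (k.val + 1) := P_mono m (Nat.le_succ _)
  have hmono2 : P (borelMove m i j) k.val ≤ P (borelMove m i j) (k.val + 1) :=
    P_mono _ (Nat.le_succ _)
  have htj' : 0 < min (P m ((j : ℕ) + 1)) d - min (P m (j : ℕ)) d := by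
    rw [← trunc_apply]; exact htj
  rw [trunc_apply]
  show _ ≤ (if k = i then trunc d m k + 1 else if k = j then trunc d m k - 1 else trunc d m k)
  rcases eq_or_ne k i with rfl | hki
  · rw [if_pos rfl, trunc_apply]
    split_ifs at h1 h2 <;> omega
  · rw [if_neg hki]
    rcases eq_or_ne k j with rfl | hkj
    · rw [if_pos rfl, trunc_apply]
      split_ifs at h1 h2 <;> omega
    · rw [if_neg hkj, trunc_apply]
      have hki' : (k : ℕ) ≠ (i : ℕ) := fun h => hki (Fin.ext h)
      have hkj' : (k : ℕ) ≠ (j : ℕ) := fun h => hkj (Fin.ext h)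
      split_ifs at h1 h2 <;> omega

lemma stronglyStable_truncIdeal {n : ℕ} {J : Set (Mon n)} (hJ : StronglyStable J) (d : ℕ) :
    StronglyStable (truncIdeal d J) := by
  constructor
  · rintro a ⟨m, hm, hma⟩ b hab
    exact ⟨m, hm, hma.trans hab⟩
  · rintro v ⟨m, hm, hmv⟩ i j hij hvj
    rcases Nat.eq_zero_or_pos (trunc d m j) with h0 | h0
    · refine ⟨m, hm, fun k => ?_⟩
      have hk : trunc d m k ≤ v k := hmv k
      show trunc d m k ≤ borelMove v i j k
      simp only [borelMove]
      rcases eq_or_ne k i with rfl | h1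
      · rw [if_pos rfl]; omega
      · rw [if_neg h1]
        rcases eq_or_ne k j with rfl | h2
        · rw [if_pos rfl]; omega
        · rw [if_neg h2]; exact hk
    · have hmj : 0 < m j := lt_of_lt_of_le h0 (trunc_le_self d m j)
      refine ⟨borelMove m i j, hJ.2 m hm i j hij hmj, ?_⟩
      exact le_trans (trunc_borelMove_le hij hmj h0) (borelMove_mono hmv i j)

end Stmt10Aux

open Stmt10Aux in
/-- For a strongly stable ideal `J` and a positive integer `d`,
`trunc_d(J) = Borel({trunc_d(m) : m ∈ Bgens(J)})`. -/
theorem stmt10 {n : ℕ} (J : Set (Mon n)) (hJ : StronglyStable J) (d : ℕ) (hd : 0 < d) :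
    truncIdeal d J = borelCl (trunc d '' bgens J) := by
  apply subset_antisymm
  · rintro v ⟨m, hmJ, hle⟩
    have hstab := stronglyStable_borelCl (trunc d '' bgens J)
    refine hstab.1 (trunc d m) ?_ v hle
    have hm2 : m ∈ domCl (bgens J) := by
      rw [← borelCl_eq_domCl]
      exact subset_borelCl_bgens hJ hmJ
    obtain ⟨u, hu, w, hwm, hdeg, hP⟩ := hm2
    rw [borelCl_eq_domCl]
    refine ⟨trunc d u, ⟨u, hu, rfl⟩, trunc (min (deg w) d) (trunc d m), trunc_le_self _ _, ?_, ?_⟩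
    · rw [deg_P (trunc (min (deg w) d) (trunc d m)), deg_P (trunc d u)]
      simp only [P_trunc]
      have h1 : P w n ≤ P m n := P_le hwm n
      have h2 : deg w = P w n := deg_P w
      have h3 : deg u = P u n := deg_P u
      omega
    · intro k
      simp only [P_trunc]
      have h1 := hP k
      have h2 := P_le hwm k
      have h3 := P_le_deg w k
      omega
  · apply borelCl_subset (stronglyStable_truncIdeal hJ d)
    rintro x ⟨u, hu, rfl⟩
    exact ⟨u, bgens_subset hJ hu, le_rfl⟩
end

section
/- Fix a weight vector w and a monomial m ∈ S. For every degree d ≤ deg_w(m), the set of degree-d monomials in the ψ-preimage of the minimal generators of trunc_d(Borel(ψ(m))) equals the set of degree-d minimal monomial generators of the ideal ψ^{-1}(trunc_d(Borel(ψ(m)))); i.e., ψ^{-1}(G(trunc_d(Borel(ψ(m))))_d) = G(ψ^{-1}(trunc_d(Borel(ψ(m)))))_d. -/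
open Finset

lemma deg_mono {n : ℕ} {a b : Mon n} (h : a ≤ b) : deg a ≤ deg b :=
  Finset.sum_le_sum fun i _ => h i

lemma eq_of_le_of_deg_eq {n : ℕ} {a b : Mon n} (h : a ≤ b) (hd : deg a = deg b) : a = b := by
  funext i
  unfold deg at hd
  exact (Finset.sum_eq_sum_iff_of_le (fun i _ => h i)).mp hd i (Finset.mem_univ i)

lemma deg_borelMove {n : ℕ} (x : Mon n) (i j : Fin n) (hij : i ≠ j) (hj : 0 < x j) :
    deg (borelMove x i j) = deg x := by
  have key : ∀ k, borelMove x i j k + (if k = j then 1 else 0)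
      = x k + (if k = i then 1 else 0) := by
    intro k
    unfold borelMove
    by_cases hki : k = i
    · subst hki
      simp [hij, if_neg hij]
    · by_cases hkj : k = j
      · subst hkj
        simp [hki, Nat.sub_add_cancel hj]
      · simp [hki, hkj]
  have := Finset.sum_congr rfl (fun k (_ : k ∈ (Finset.univ : Finset (Fin n))) => key k)
  rw [Finset.sum_add_distrib, Finset.sum_add_distrib] at this
  simp only [Finset.sum_ite_eq', Finset.mem_univ, if_true] at this
  unfold deg
  omega

lemma deg_le_of_mem_borelCl {n : ℕ} (m0 : Mon n) {x : Mon n} (hx : x ∈ borelCl {m0}) :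
    deg m0 ≤ deg x := by
  have : x ∈ {y : Mon n | deg m0 ≤ deg y} := by
    apply hx
    refine ⟨⟨fun a ha b hab => le_trans ha (deg_mono hab), ?_⟩, ?_⟩
    · intro a ha i j hij hj
      rw [Set.mem_setOf_eq, deg_borelMove a i j (ne_of_lt hij) hj]
      exact ha
    · intro y hy
      rw [Set.mem_singleton_iff] at hy
      rw [hy]; exact le_refl (deg m0)
  exact this

lemma deg_trunc {n : ℕ} (d : ℕ) (m : Mon n) : deg (trunc d m) = min (deg m) d := by
  set F : ℕ → ℕ := fun t => min (∑ i ∈ Finset.univ.filter (fun i : Fin n => i.val < t), m i) d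
    with hF
  have hFmono : Monotone F := by
    intro s t hst
    have hsub : Finset.univ.filter (fun i : Fin n => i.val < s)
        ⊆ Finset.univ.filter (fun i : Fin n => i.val < t) := by
      intro i hi
      simp only [Finset.mem_filter, Finset.mem_univ, true_and] at hi ⊢
      omega
    exact min_le_min (Finset.sum_le_sum_of_subset hsub) (le_refl d)
  have htr : ∀ k : Fin n, trunc d m k = F (k.val + 1) - F k.val := by
    intro k
    have hle : Finset.univ.filter (· ≤ k)
        = Finset.univ.filter (fun i : Fin n => i.val < k.val + 1) := by
      ext i
      simp only [Finset.mem_filter, Finset.mem_univ, true_and, Fin.le_def, Nat.lt_succ_iff]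
    have hlt : Finset.univ.filter (· < k)
        = Finset.univ.filter (fun i : Fin n => i.val < k.val) := by
      ext i
      simp only [Finset.mem_filter, Finset.mem_univ, true_and, Fin.lt_def]
    simp only [trunc, psum, psumLt, hle, hlt, hF]
  have h1 : deg (trunc d m) = ∑ k ∈ Finset.range n, (F (k + 1) - F k) := by
    unfold deg
    rw [Finset.sum_congr rfl (fun k _ => htr k)]
    exact Fin.sum_univ_eq_sum_range (fun t => F (t + 1) - F t) n
  rw [h1, Finset.sum_range_tsub hFmono]
  have hFn : F n = min (deg m) d := by
    have huniv : Finset.univ.filter (fun i : Fin n => i.val < n) = Finset.univ :=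
      Finset.filter_true_of_mem (fun i _ => i.isLt)
    simp only [hF, huniv, deg]
  have hF0 : F 0 = 0 := by simp [hF]
  rw [hFn, hF0, Nat.sub_zero]

lemma deg_le_of_mem_truncIdeal {n : ℕ} {d : ℕ} {m0 : Mon n} (hd : d ≤ deg m0)
    {v : Mon n} (hv : v ∈ truncIdeal d (borelCl {m0})) : d ≤ deg v := by
  obtain ⟨m', hm', hle⟩ := hv
  have h1 : d ≤ deg (trunc d m') := by
    rw [deg_trunc]
    exact le_min (le_trans hd (deg_le_of_mem_borelCl m0 hm')) (le_refl d)
  exact le_trans h1 (deg_mono hle)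

lemma deg_psi {n : ℕ} (w : Fin n → ℕ) (u : Mon n) : deg (psi w u) = degW w u := rfl

lemma psi_mono {n : ℕ} (w : Fin n → ℕ) {a b : Mon n} (h : a ≤ b) : psi w a ≤ psi w b :=
  fun i => Nat.mul_le_mul_left _ (h i)

/-- For `d ≤ deg_w(m)`,
`ψ⁻¹(G(trunc_d(Borel(ψ(m))))_d) = G(ψ⁻¹(trunc_d(Borel(ψ(m)))))_d`
(degrees in `S` being weighted, i.e. `deg_w`). -/

theorem stmt12 {n : ℕ} (w : Fin n → ℕ) (hpos : ∀ i, 0 < w i) (hmono : Antitone w) (m : Mon n) (d : ℕ) (hd : d ≤ degW w m) :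
    psi w ⁻¹' {v ∈ minGens (truncIdeal d (borelCl {psi w m})) | deg v = d}
      = {u ∈ minGens (psi w ⁻¹' truncIdeal d (borelCl {psi w m})) | degW w u = d} := by
  have hd' : d ≤ deg (psi w m) := by rw [deg_psi]; exact hd
  ext u
  simp only [Set.mem_preimage, Set.mem_setOf_eq, minGens]
  constructor
  · rintro ⟨⟨hu, -⟩, hdeg⟩
    have hdeg' : degW w u = d := by rw [← deg_psi w u]; exact hdeg
    refine ⟨⟨hu, ?_⟩, hdeg'⟩
    intro v hv hvu
    have hψ : psi w v ≤ psi w u := psi_mono w hvu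
    have h1 : psi w v = psi w u := by
      apply eq_of_le_of_deg_eq hψ
      have h2 := deg_le_of_mem_truncIdeal hd' hv
      have h3 : deg (psi w v) ≤ deg (psi w u) := deg_mono hψ
      omega
    funext i
    exact Nat.eq_of_mul_eq_mul_left (hpos i) (congrFun h1 i)
  · rintro ⟨⟨hu, -⟩, hdeg⟩
    have hdeg' : deg (psi w u) = d := by rw [deg_psi]; exact hdeg
    refine ⟨⟨hu, ?_⟩, hdeg'⟩
    intro v hv hvu
    apply eq_of_le_of_deg_eq hvu
    have h2 := deg_le_of_mem_truncIdeal hd' hv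
    have h3 := deg_mono hvu
    omega
end
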